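/- arXiv:2204.13832 — 8 statements merged into one kernel-verified Lean document; each statement's English description precedes it below -/
import Mathlib

section
/- Let S_0 = ∅, S_1, …, S_b be the sequence of sets produced by the greedy algorithm (at step t, S_{t+1} = S_t ∪ {e_t} where e_t maximizes the marginal gain Δ_e f(S_t) over all elements e ∈ V_i \ S_t with i ranging over indices such that |S_t ∩ V_i| < b_i), and let S* be a feasible set maximizing f. Then γ · f(S*) ≤ (1 + γ·α) · f(S_b). -/
open Finset

private def gseq {ι : Type*} (step : ℕ → Finset ι → Finset ι) : ℕ → Finset ι
  | 0 => ∅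
  | t+1 => step t (gseq step t)

/-- Greedy for monotone non-submodular maximization under a partition matroid:
if `γ` is a partition-matroid diminishing-return ratio and `α` a
partition-matroid curvature of the monotone normalized function `f`, and
`S 0 = ∅, S 1, …, S b` is a run of the greedy algorithm, then
`γ · f(S*) ≤ (1 + γ·α) · f(S b)` for any feasible maximizer `S*`. -/
theorem greedy_partition_matroid_ratio_one
    {ι : Type*} [Fintype ι] [DecidableEq ι]
    (k : ℕ) (part : ι → Fin k) (bi : Fin k → ℕ)
    (hbi : ∀ i, 1 ≤ bi i ∧ bi i ≤ (Finset.univ.filter fun x => part x = i).card)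
    (b : ℕ) (hb : b = ∑ i, bi i)
    (f : Finset ι → ℝ)
    (hmono : ∀ S T : Finset ι, S ⊆ T → f S ≤ f T)
    (hf0 : f (∅ : Finset ι) = 0)
    (γ α : ℝ) (hγ0 : 0 < γ) (hγ1 : γ ≤ 1) (hα0 : 0 ≤ α) (hα1 : α ≤ 1)
    -- γ is a partition-matroid diminishing-return ratio of f
    (hDR : ∀ S T : Finset ι, S ⊆ T →
      (∀ i, ((T \ S).filter fun x => part x = i).card ≤ bi i) →
      ∀ e ∉ T, γ * (f (insert e T) - f T) ≤ f (insert e S) - f S)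
    -- α is a partition-matroid curvature of f
    (hCurv : ∀ S T : Finset ι, S ⊆ T →
      (∀ i, ((T \ S).filter fun x => part x = i).card ≤ bi i) →
      ∀ e ∉ T, f (insert e T) - f T ≥ (1 - α) * (f (insert e S) - f S))
    -- S is the sequence of sets produced by the greedy algorithm
    (S : ℕ → Finset ι)
    (hS0 : S 0 = ∅)
    (hstep : ∀ t < b, ∃ e ∉ S t,
      ((S t).filter fun x => part x = part e).card < bi (part e) ∧
      S (t + 1) = insert e (S t) ∧
      ∀ e' ∉ S t, ((S t).filter fun x => part x = part e').card < bi (part e') →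
        f (insert e' (S t)) - f (S t) ≤ f (insert e (S t)) - f (S t))
    -- S* is a feasible set maximizing f
    (Sstar : Finset ι)
    (hfeas : ∀ i, (Sstar.filter fun x => part x = i).card ≤ bi i)
    (hopt : ∀ Q : Finset ι, (∀ i, (Q.filter fun x => part x = i).card ≤ bi i) → f Q ≤ f Sstar) :
    γ * f Sstar ≤ (1 + γ * α) * f (S b) := by
  classical
  rcases isEmpty_or_nonempty ι with hι | hι
  · have h1 : Sstar = ∅ := Finset.eq_empty_of_isEmpty _
    have h2 : S b = ∅ := Finset.eq_empty_of_isEmpty _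
    rw [h1, h2, hf0, mul_zero, mul_zero]
  inhabit ι
  -- extract greedy choices as a total function
  have hstep' : ∀ t, ∃ e : ι, t < b →
      e ∉ S t ∧ ((S t).filter fun x => part x = part e).card < bi (part e) ∧
      S (t+1) = insert e (S t) ∧
      ∀ e' ∉ S t, ((S t).filter fun x => part x = part e').card < bi (part e') →
        f (insert e' (S t)) - f (S t) ≤ f (insert e (S t)) - f (S t) := by
    intro t
    by_cases ht : t < b
    · obtain ⟨e, he1, he2⟩ := hstep t ht
      exact ⟨e, fun _ => ⟨he1, he2⟩⟩
    · exact ⟨default, fun h => absurd h ht⟩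
  choose E hE using hstep'
  have hEnot : ∀ t, t < b → E t ∉ S t := fun t ht => (hE t ht).1
  have hElt : ∀ t, t < b →
      ((S t).filter fun x => part x = part (E t)).card < bi (part (E t)) :=
    fun t ht => (hE t ht).2.1
  have hSsucc : ∀ t, t < b → S (t+1) = insert (E t) (S t) := fun t ht => (hE t ht).2.2.1
  have hEopt := fun t ht => (hE t ht).2.2.2
  have hsub1 : ∀ t, t < b → S t ⊆ S (t+1) := by
    intro t ht; rw [hSsucc t ht]; exact subset_insert _ _
  have hchain : ∀ u, u ≤ b → ∀ t, t ≤ u → S t ⊆ S u := by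
    intro u
    induction u with
    | zero => intro _ t ht; rw [Nat.le_zero.mp ht]
    | succ n ih =>
      intro hub t ht
      rcases Nat.le_succ_iff.mp ht with h | h
      · exact (ih (by omega) t h).trans (hsub1 n (by omega))
      · rw [h]
  have hcard : ∀ t, t ≤ b → (S t).card = t := by
    intro t
    induction t with
    | zero => intro _; rw [hS0]; rfl
    | succ n ih =>
      intro h
      rw [hSsucc n (by omega), card_insert_of_notMem (hEnot n (by omega)), ih (by omega)]
  have hcount : ∀ t, t ≤ b → ∀ j, ((S t).filter fun x => part x = j).card ≤ bi j := by
    intro t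
    induction t with
    | zero => intro _ j; rw [hS0]; simp
    | succ n ih =>
      intro h j
      have hn : n < b := by omega
      rw [hSsucc n hn, filter_insert]
      by_cases hj : part (E n) = j
      · rw [if_pos hj]
        have hlt := hElt n hn
        rw [hj] at hlt
        calc (insert (E n) ((S n).filter fun x => part x = j)).card
            ≤ ((S n).filter fun x => part x = j).card + 1 := card_insert_le _ _
          _ ≤ bi j := hlt
      · rw [if_neg hj]; exact ih (by omega) j
  have hsumfib : ∑ j, ((S b).filter fun x => part x = j).card = b := by
    have hfib := Finset.card_eq_sum_card_fiberwise
      (s := S b) (t := univ) (f := part) (fun x _ => mem_univ _)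
    rw [← hfib, hcard b le_rfl]
  have hfull : ∀ j, ((S b).filter fun x => part x = j).card = bi j := by
    have hle : ∀ j ∈ (univ : Finset (Fin k)),
        ((S b).filter fun x => part x = j).card ≤ bi j := fun j _ => hcount b le_rfl j
    have heq : ∑ j, ((S b).filter fun x => part x = j).card = ∑ j, bi j := by
      rw [hsumfib, hb]
    intro j
    exact (Finset.sum_eq_sum_iff_of_le hle).mp heq j (mem_univ j)
  have hδ0 : ∀ t, t < b → 0 ≤ f (S (t+1)) - f (S t) := by
    intro t ht
    have := hmono _ _ (hsub1 t ht); linarith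
  have hfSb : f (S b) = ∑ t ∈ range b, (f (S (t+1)) - f (S t)) := by
    rw [Finset.sum_range_sub (fun t => f (S t)) b, hS0, hf0, sub_zero]
  set D : ℝ := ∑ t ∈ range b, (if E t ∈ Sstar then 0 else f (S (t+1)) - f (S t)) with hD
  have hD0 : 0 ≤ D := by
    rw [hD]
    apply Finset.sum_nonneg
    intro t ht
    split_ifs
    · exact le_rfl
    · exact hδ0 t (mem_range.mp ht)
  have hDA : D ≤ f (S b) := by
    rw [hD, hfSb]
    apply Finset.sum_le_sum
    intro t ht
    split_ifs
    · exact hδ0 t (mem_range.mp ht)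
    · exact le_rfl
  -- curvature part
  have hcurvsum : (1 - α) * D ≤ f (Sstar ∪ S b) - f Sstar := by
    have hstep1 : ∀ t ∈ range b,
        (1-α) * (if E t ∈ Sstar then 0 else f (S (t+1)) - f (S t)) ≤
          f (Sstar ∪ S (t+1)) - f (Sstar ∪ S t) := by
      intro t ht'
      have ht : t < b := mem_range.mp ht'
      by_cases hes : E t ∈ Sstar
      · rw [if_pos hes, hSsucc t ht, union_insert,
          insert_eq_self.mpr (mem_union_left _ hes), mul_zero, sub_self]
      · rw [if_neg hes, hSsucc t ht, union_insert]
        have hcap : ∀ i, (((Sstar ∪ S t) \ S t).filter fun x => part x = i).card ≤ bi i := by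
          intro i
          refine le_trans (card_le_card (filter_subset_filter _ ?_)) (hfeas i)
          intro x hx
          rcases mem_sdiff.mp hx with ⟨hx1, hx2⟩
          rcases mem_union.mp hx1 with h | h
          · exact h
          · exact absurd h hx2
        have hnotin : E t ∉ Sstar ∪ S t := by
          rw [mem_union]; push_neg; exact ⟨hes, hEnot t ht⟩
        have hc := hCurv (S t) (Sstar ∪ S t) subset_union_right hcap (E t) hnotin
        linarith [hc]
    calc (1-α) * D
        = ∑ t ∈ range b, (1-α) * (if E t ∈ Sstar then 0 else f (S (t+1)) - f (S t)) := by
          rw [hD, Finset.mul_sum]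
      _ ≤ ∑ t ∈ range b, (f (Sstar ∪ S (t+1)) - f (Sstar ∪ S t)) := Finset.sum_le_sum hstep1
      _ = f (Sstar ∪ S b) - f (Sstar ∪ S 0) := Finset.sum_range_sub (fun t => f (Sstar ∪ S t)) b
      _ = f (Sstar ∪ S b) - f Sstar := by rw [hS0, union_empty]
  -- DR part: build the assignment sequence g
  set R := Sstar \ S b with hR
  have hex : ∀ (t : ℕ) (gt : Finset ι), ∃ gt' : Finset ι,
      ((t < b ∧ E t ∉ Sstar ∧ ∃ x, x ∈ (R.filter fun y => part y = part (E t)) \ gt) →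
        ∃ o ∈ (R.filter fun y => part y = part (E t)) \ gt, gt' = insert o gt) ∧
      (¬(t < b ∧ E t ∉ Sstar ∧ ∃ x, x ∈ (R.filter fun y => part y = part (E t)) \ gt) →
        gt' = gt) := by
    intro t gt
    by_cases h : t < b ∧ E t ∉ Sstar ∧ ∃ x, x ∈ (R.filter fun y => part y = part (E t)) \ gt
    · obtain ⟨o, ho⟩ := h.2.2
      exact ⟨insert o gt, fun _ => ⟨o, ho, rfl⟩, fun h' => absurd h h'⟩
    · exact ⟨gt, fun h' => absurd h' h, fun _ => rfl⟩
  choose stp hpos hneg using hex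
  set g : ℕ → Finset ι := gseq stp with hg
  have hg0 : g 0 = ∅ := rfl
  have hgsucc : ∀ t, g (t+1) = stp t (g t) := fun t => rfl
  -- invariants
  have hInv : ∀ t, t ≤ b → g t ⊆ R ∧ ∀ j, ((g t).filter fun x => part x = j).card =
      min ((R.filter fun x => part x = j)).card
        (((S t \ Sstar).filter fun x => part x = j)).card := by
    intro t
    induction t with
    | zero =>
      intro _
      refine ⟨by rw [hg0]; exact empty_subset _, ?_⟩
      intro j; rw [hg0, hS0]; simp
    | succ n ih =>
      intro h
      have hn : n < b := by omega
      obtain ⟨ihsub, ihcnt⟩ := ih (by omega)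
      by_cases hc : n < b ∧ E n ∉ Sstar ∧
          ∃ x, x ∈ (R.filter fun y => part y = part (E n)) \ g n
      · obtain ⟨o, ho, hins⟩ := hpos n (g n) hc
        have hgn1 : g (n+1) = insert o (g n) := by rw [hgsucc n, hins]
        rcases mem_sdiff.mp ho with ⟨hoRf, hog⟩
        rcases mem_filter.mp hoRf with ⟨hoR, hop⟩
        have hSd : S (n+1) \ Sstar = insert (E n) (S n \ Sstar) := by
          rw [hSsucc n hn]
          exact insert_sdiff_of_notMem _ hc.2.1
        constructor
        · rw [hgn1]
          exact insert_subset hoR ihsub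
        · intro j
          rw [hgn1, hSd, filter_insert, filter_insert]
          by_cases hj : part (E n) = j
          · have hoj : part o = j := by rw [hop, hj]
            rw [if_pos hoj, if_pos hj]
            have h1 : o ∉ (g n).filter fun x => part x = j := fun hmem =>
              hog (mem_of_mem_filter _ hmem)
            have h2 : E n ∉ (S n \ Sstar).filter fun x => part x = j := fun hmem =>
              hEnot n hn (mem_sdiff.mp (mem_of_mem_filter _ hmem)).1
            rw [card_insert_of_notMem h1, card_insert_of_notMem h2]
            have hlt : ((g n).filter fun x => part x = j).card <
                (R.filter fun x => part x = j).card := by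
              apply card_lt_card
              rw [Finset.ssubset_iff_of_subset (filter_subset_filter _ ihsub)]
              refine ⟨o, ?_, ?_⟩
              · rw [← hj]
                exact hoRf
              · exact h1
            have := ihcnt j
            omega
          · have hoj : ¬ part o = j := by rw [hop]; exact hj
            rw [if_neg hoj, if_neg hj]
            exact ihcnt j
      · have hgn1 : g (n+1) = g n := by rw [hgsucc n, hneg n (g n) hc]
        refine ⟨by rw [hgn1]; exact ihsub, ?_⟩
        intro j
        by_cases hes : E n ∈ Sstar
        · have hSd : S (n+1) \ Sstar = S n \ Sstar := by
            rw [hSsucc n hn]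
            exact insert_sdiff_of_mem _ hes
          rw [hgn1, hSd]
          exact ihcnt j
        · -- no available element in block of E n
          have hempty : ∀ x, x ∉ (R.filter fun y => part y = part (E n)) \ g n := by
            intro x hx
            exact hc ⟨hn, hes, ⟨x, hx⟩⟩
          have hRg : (R.filter fun y => part y = part (E n)) ⊆
              (g n).filter fun y => part y = part (E n) := by
            intro x hx
            rcases mem_filter.mp hx with ⟨hx1, hx2⟩
            by_cases hxg : x ∈ g n
            · exact mem_filter.mpr ⟨hxg, hx2⟩
            · exact absurd (mem_sdiff.mpr ⟨hx, hxg⟩) (hempty x)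
          have hSd : S (n+1) \ Sstar = insert (E n) (S n \ Sstar) := by
            rw [hSsucc n hn]
            exact insert_sdiff_of_notMem _ hes
          rw [hgn1, hSd, filter_insert]
          by_cases hj : part (E n) = j
          · rw [if_pos hj]
            have h2 : E n ∉ (S n \ Sstar).filter fun x => part x = j := fun hmem =>
              hEnot n hn (mem_sdiff.mp (mem_of_mem_filter _ hmem)).1
            rw [card_insert_of_notMem h2]
            have hge : (R.filter fun x => part x = j).card ≤
                ((g n).filter fun x => part x = j).card := by
              rw [← hj]
              exact card_le_card hRg
            have := ihcnt j
            omega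
          · rw [if_neg hj]
            exact ihcnt j
  -- per-step DR inequality
  have hdrstep : ∀ t ∈ range b, γ * (f (S b ∪ g (t+1)) - f (S b ∪ g t)) ≤
      (if E t ∈ Sstar then 0 else f (S (t+1)) - f (S t)) := by
    intro t ht'
    have ht : t < b := mem_range.mp ht'
    by_cases hc : t < b ∧ E t ∉ Sstar ∧
        ∃ x, x ∈ (R.filter fun y => part y = part (E t)) \ g t
    · obtain ⟨o, ho, hins⟩ := hpos t (g t) hc
      have hgn1 : g (t+1) = insert o (g t) := by rw [hgsucc t, hins]
      rcases mem_sdiff.mp ho with ⟨hoRf, hog⟩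
      rcases mem_filter.mp hoRf with ⟨hoR, hop⟩
      rcases mem_sdiff.mp (hR ▸ hoR) with ⟨hoSs, hoSb⟩
      obtain ⟨hgsub, hgcnt⟩ := hInv t (le_of_lt ht)
      have honot : o ∉ S b ∪ g t := by
        rw [mem_union]; push_neg; exact ⟨hoSb, hog⟩
      have hStSb : S t ⊆ S b := hchain b le_rfl t (le_of_lt ht)
      have hsubT : S t ⊆ S b ∪ g t := hStSb.trans subset_union_left
      have hcap : ∀ i, (((S b ∪ g t) \ S t).filter fun x => part x = i).card ≤ bi i := by
        intro i
        have h1 : ((S b ∪ g t) \ S t) ⊆ (S b \ S t) ∪ g t := by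
          intro x hx
          rcases mem_sdiff.mp hx with ⟨hx1, hx2⟩
          rcases mem_union.mp hx1 with hmem | hmem
          · exact mem_union_left _ (mem_sdiff.mpr ⟨hmem, hx2⟩)
          · exact mem_union_right _ hmem
        have h2 : (((S b ∪ g t) \ S t).filter fun x => part x = i).card ≤
            ((S b \ S t).filter fun x => part x = i).card +
              ((g t).filter fun x => part x = i).card := by
          calc (((S b ∪ g t) \ S t).filter fun x => part x = i).card
              ≤ (((S b \ S t) ∪ g t).filter fun x => part x = i).card :=
                card_le_card (filter_subset_filter _ h1)
            _ = (((S b \ S t).filter fun x => part x = i) ∪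
                  ((g t).filter fun x => part x = i)).card := by rw [filter_union]
            _ ≤ _ := card_union_le _ _
        have h3 : ((S b \ S t).filter fun x => part x = i) =
            ((S b).filter fun x => part x = i) \ ((S t).filter fun x => part x = i) := by
          ext x; simp only [mem_filter, mem_sdiff]; tauto
        have h4 : (((S b).filter fun x => part x = i) \
            ((S t).filter fun x => part x = i)).card =
            bi i - ((S t).filter fun x => part x = i).card := by
          rw [card_sdiff_of_subset (filter_subset_filter _ hStSb), hfull i]
        have h5 : ((g t).filter fun x => part x = i).card ≤
            ((S t).filter fun x => part x = i).card := by
          rw [hgcnt i]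
          calc min ((R.filter fun x => part x = i)).card
                (((S t \ Sstar).filter fun x => part x = i)).card
              ≤ ((S t \ Sstar).filter fun x => part x = i).card := min_le_right _ _
            _ ≤ _ := card_le_card (filter_subset_filter _ sdiff_subset)
        have h6 := hcount t (le_of_lt ht) i
        rw [h3] at h2
        omega
      have hdr := hDR (S t) (S b ∪ g t) hsubT hcap o honot
      have hopt' := hEopt t ht o (fun hmem => hoSb (hStSb hmem))
        (by rw [hop]; exact hElt t ht)
      rw [if_neg hc.2.1, hgn1, union_insert, hSsucc t ht]
      linarith [hdr, hopt']
    · have hgn1 : g (t+1) = g t := by rw [hgsucc t, hneg t (g t) hc]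
      rw [hgn1, sub_self, mul_zero]
      split_ifs
      · exact le_rfl
      · exact hδ0 t ht
  -- g b = R
  have hgb : g b = R := by
    obtain ⟨hsub, hcnt⟩ := hInv b le_rfl
    have hmc : ∀ j, ((R.filter fun x => part x = j)).card ≤
        (((S b \ Sstar)).filter fun x => part x = j).card := by
      intro j
      have e1 : R.filter (fun x => part x = j) =
          (Sstar.filter fun x => part x = j) \ ((S b).filter fun x => part x = j) := by
        rw [hR]; ext x; simp only [mem_filter, mem_sdiff]; tauto
      have e2 : (S b \ Sstar).filter (fun x => part x = j) =
          ((S b).filter fun x => part x = j) \ (Sstar.filter fun x => part x = j) := by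
        ext x; simp only [mem_filter, mem_sdiff]; tauto
      rw [e1, e2]
      have h1 := hfeas j
      have h2 := hfull j
      have h3 := card_sdiff_add_card_inter (Sstar.filter fun x => part x = j)
        ((S b).filter fun x => part x = j)
      have h4 := card_sdiff_add_card_inter ((S b).filter fun x => part x = j)
        (Sstar.filter fun x => part x = j)
      have h5 : ((Sstar.filter fun x => part x = j) ∩ ((S b).filter fun x => part x = j)) =
          (((S b).filter fun x => part x = j) ∩ (Sstar.filter fun x => part x = j)) :=
        inter_comm _ _
      rw [h5] at h3
      omega
    apply Finset.eq_of_subset_of_card_le hsub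
    have c1 : (g b).card = ∑ j, ((g b).filter fun x => part x = j).card :=
      Finset.card_eq_sum_card_fiberwise (fun x _ => mem_univ _)
    have c2 : R.card = ∑ j, (R.filter fun x => part x = j).card :=
      Finset.card_eq_sum_card_fiberwise (fun x _ => mem_univ _)
    rw [c1, c2]
    apply le_of_eq
    apply Finset.sum_congr rfl
    intro j _
    rw [hcnt j, min_eq_left (hmc j)]
  have hdrsum : γ * (f (Sstar ∪ S b) - f (S b)) ≤ D := by
    have hsum : ∑ t ∈ range b, (f (S b ∪ g (t+1)) - f (S b ∪ g t)) =
        f (Sstar ∪ S b) - f (S b) := by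
      rw [Finset.sum_range_sub (fun t => f (S b ∪ g t)) b, hg0, union_empty, hgb, hR,
        union_sdiff_self_eq_union, union_comm]
    calc γ * (f (Sstar ∪ S b) - f (S b))
        = ∑ t ∈ range b, γ * (f (S b ∪ g (t+1)) - f (S b ∪ g t)) := by
          rw [← Finset.mul_sum, hsum]
      _ ≤ D := by rw [hD]; exact Finset.sum_le_sum hdrstep
  -- final arithmetic
  have k1 : 0 ≤ 1 - γ + γ * α := by nlinarith [mul_nonneg hγ0.le hα0]
  have k2 : 0 ≤ (1 - γ + γ * α) * (f (S b) - D) := mul_nonneg k1 (by linarith)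
  have m1 : γ * ((1-α) * D) ≤ γ * (f (Sstar ∪ S b) - f Sstar) :=
    mul_le_mul_of_nonneg_left hcurvsum hγ0.le
  nlinarith [m1, hdrsum, k2]
end

section
/- Let S_0 = ∅, S_1, …, S_b be the sequence of sets produced by the greedy algorithm (at step t, S_{t+1} = S_t ∪ {e_t} where e_t maximizes the marginal gain Δ_e f(S_t) over all elements e ∈ V_i \ S_t with i ranging over indices such that |S_t ∩ V_i| < b_i), let b̂ = min_{i∈[k]} b_i, and let S* be a feasible set maximizing f. Then (1 − (1 − α·γ/b)^{b̂}) · f(S*) ≤ α · f(S_b). -/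
/-!
Let `ρ_t` be the gain of greedy step `t`, `τ_t` the total gain of the steps that picked an
element outside `S*`, and `s_t = |S* ∩ S_t|`. Applying the curvature bound along those steps gives
`f(S*) + (1 - α) τ_t ≤ f(S* ∪ S_t)`. While `t < b̂` every element is still admissible, so the
greedy choice and the diminishing-return ratio give `γ (f(S* ∪ S_t) - f(S_t)) ≤ (b - s_t) ρ_t`.
Hence the gap `X_t = f(S*) - f(S_t) + (1 - α) τ_t` satisfies `γ X_t ≤ (b - s_t) ρ_t`, which makes
the potential `(1 - α)(f(S_t) - τ_t) + X_t (1 - αγ/(b - s_t))^(b̂ - t)` non-increasing for `t < b̂`.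
Its values at `0` and `b̂` are `f(S*) (1 - αγ/b)^b̂` and `f(S*) - α f(S_b̂)`.
-/

lemma one_sub_pow_mul_one_add_mul_le_one {δ : ℝ} (h0 : 0 ≤ δ) (h1 : δ ≤ 1) (m : ℕ) :
    (1 - δ) ^ m * (1 + m * δ) ≤ 1 :=
  calc (1 - δ) ^ m * (1 + m * δ) ≤ (1 - δ) ^ m * (1 + δ) ^ m := by
        have := one_add_mul_le_pow (a := δ) (by linarith) m
        exact mul_le_mul_of_nonneg_left (by linarith) (pow_nonneg (by linarith) m)
    _ = (1 - δ ^ 2) ^ m := by rw [← mul_pow]; ring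
    _ ≤ 1 := pow_le_one₀ (by nlinarith) (by nlinarith)

lemma one_sub_mul_le_one_sub_pow {x : ℝ} (hx : x ≤ 2) (m : ℕ) : 1 - m * x ≤ (1 - x) ^ m := by
  have := one_add_mul_sub_le_pow (a := 1 - x) (by linarith) m
  linarith

lemma sub_div_add_mul_pow_le_pow_succ {u γ c : ℝ} {m : ℕ} (hu : 0 ≤ u) (huγ : u ≤ γ) (hγ : γ ≤ 1)
    (hc : 1 ≤ c) (hm : m ≤ c - 1) :
    (γ - u) / c + (1 - γ / c) * (1 - u / (c - 1)) ^ m ≤ (1 - u / c) ^ (m + 1) := by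
  rcases m.eq_zero_or_pos with rfl | hm0
  · simp only [pow_zero, mul_one, zero_add, pow_one]
    exact le_of_eq (by ring)
  have hm1 : (1 : ℝ) ≤ m := by exact_mod_cast hm0
  have hc1 : 0 < c - 1 := by linarith
  have hcu : 1 ≤ c - u := by linarith
  set p := 1 - u / c with hp
  set δ := u / ((c - 1) * (c - u)) with hδ
  have hp0 : 0 ≤ p := by
    rw [hp, sub_nonneg, div_le_one (by linarith)]; linarith
  have hδ0 : 0 ≤ δ := by positivity
  have hδ1 : δ ≤ 1 := by
    rw [hδ, div_le_one (by positivity)]; nlinarith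
  have hmδ : 0 < 1 + m * δ := by positivity
  -- the ratio of the two bases is `1 - δ`, and `(1 - δ) ^ m ≤ 1 / (1 + m δ)`
  have hq : (1 - u / (c - 1)) ^ m * (1 + m * δ) ≤ p ^ m := by
    have : 1 - u / (c - 1) = p * (1 - δ) := by
      rw [hp, hδ]; field_simp; ring
    rw [this, mul_pow, mul_assoc]
    exact mul_le_of_le_one_right (pow_nonneg hp0 m) (one_sub_pow_mul_one_add_mul_le_one hδ0 hδ1 m)
  have hbern : 1 - m * (u / c) ≤ p ^ m :=
    one_sub_mul_le_one_sub_pow (by rw [div_le_iff₀ (by linarith)]; linarith) m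
  have hcore : (γ - u) * (1 + m * δ) ≤ (1 - m * (u / c)) * ((γ - u) + m * u / (c - 1)) := by
    have hbracket : 0 ≤ (c - m * u) * (c - u) - (γ - u) * (c + (c - 1) * (c - u)) := by
      have h1 : (c - (c - 1) * u) * (c - u) ≤ (c - m * u) * (c - u) := by
        gcongr
      have h2 : (γ - u) * (c + (c - 1) * (c - u)) ≤ (1 - u) * (c + (c - 1) * (c - u)) := by
        gcongr
      nlinarith
    have : (1 - m * (u / c)) * ((γ - u) + m * u / (c - 1)) - (γ - u) * (1 + m * δ)
        = m * u * ((c - m * u) * (c - u) - (γ - u) * (c + (c - 1) * (c - u)))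
          / (c * (c - 1) * (c - u)) := by
      rw [hδ]; field_simp; ring
    have : 0 ≤ m * u * ((c - m * u) * (c - u) - (γ - u) * (c + (c - 1) * (c - u)))
          / (c * (c - 1) * (c - u)) := by
      apply div_nonneg (by positivity) (by positivity)
    linarith
  have hid : ((γ - u) + m * u / (c - 1)) / c + (1 - γ / c) = p * (1 + m * δ) := by
    rw [hp, hδ]; field_simp; ring
  refine le_of_mul_le_mul_right ?_ hmδ
  calc ((γ - u) / c + (1 - γ / c) * (1 - u / (c - 1)) ^ m) * (1 + m * δ)
      = (γ - u) * (1 + m * δ) / c + (1 - γ / c) * ((1 - u / (c - 1)) ^ m * (1 + m * δ)) := by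
        ring
    _ ≤ p ^ m * ((γ - u) + m * u / (c - 1)) / c + (1 - γ / c) * p ^ m := by
        have hγc : 0 ≤ 1 - γ / c := by
          rw [sub_nonneg, div_le_one (by linarith)]; linarith
        have hw : 0 ≤ (γ - u) + m * u / (c - 1) := by
          have : 0 ≤ m * u / (c - 1) := by positivity
          linarith
        refine add_le_add (div_le_div_of_nonneg_right ?_ (by linarith))
          (mul_le_mul_of_nonneg_left hq hγc)
        exact hcore.trans (mul_le_mul_of_nonneg_right hbern hw)
    _ = p ^ (m + 1) * (1 + m * δ) := by
        rw [pow_succ, mul_assoc, ← hid]; ring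

section PotentialStep

variable {α γ c X ρ : ℝ} {m : ℕ}

lemma overlap_step_le (hγ0 : 0 < γ) (hγ1 : γ ≤ 1) (hα0 : 0 ≤ α) (hα1 : α ≤ 1) (hc : 1 ≤ c)
    (hm : m ≤ c - 1) (hX : 0 ≤ X) (hρ : γ * X ≤ c * ρ) :
    (1 - α) * ρ + (X - ρ) * (1 - α * γ / (c - 1)) ^ m ≤ X * (1 - α * γ / c) ^ (m + 1) := by
  have hαγ : α * γ ≤ α := mul_le_of_le_one_right hα0 hγ1
  have hq : 1 - α ≤ (1 - α * γ / (c - 1)) ^ m := by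
    rcases m.eq_zero_or_pos with rfl | hm0
    · simpa using hα0
    have hm1 : (1 : ℝ) ≤ m := by exact_mod_cast hm0
    have hmx : m * (α * γ / (c - 1)) ≤ α * γ := by
      rw [mul_div_assoc', div_le_iff₀ (by linarith)]
      rw [mul_comm (α * γ)]
      exact mul_le_mul_of_nonneg_right hm (by positivity)
    have hx : α * γ / (c - 1) ≤ 2 := by
      rw [div_le_iff₀ (by linarith)]; nlinarith
    linarith [one_sub_mul_le_one_sub_pow hx m]
  have hρ' : γ * X / c ≤ ρ := by rw [div_le_iff₀ (by linarith)]; linarith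
  have key := sub_div_add_mul_pow_le_pow_succ (mul_nonneg hα0 hγ0.le)
    (mul_le_of_le_one_left hγ0.le hα1) hγ1 hc hm
  calc (1 - α) * ρ + (X - ρ) * (1 - α * γ / (c - 1)) ^ m
      = X * (1 - α * γ / (c - 1)) ^ m - ρ * ((1 - α * γ / (c - 1)) ^ m - (1 - α)) := by ring
    _ ≤ X * (1 - α * γ / (c - 1)) ^ m - γ * X / c * ((1 - α * γ / (c - 1)) ^ m - (1 - α)) := by
        gcongr
    _ = X * ((γ - α * γ) / c + (1 - γ / c) * (1 - α * γ / (c - 1)) ^ m) := by ring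
    _ ≤ X * (1 - α * γ / c) ^ (m + 1) := by gcongr

lemma nonoverlap_step_le (hγ0 : 0 < γ) (hγ1 : γ ≤ 1) (hα0 : 0 ≤ α) (hα1 : α ≤ 1) (hc : 1 ≤ c)
    (hρ : γ * X ≤ c * ρ) :
    (X - α * ρ) * (1 - α * γ / c) ^ m ≤ X * (1 - α * γ / c) ^ (m + 1) := by
  have hp : 0 ≤ 1 - α * γ / c := by
    rw [sub_nonneg, div_le_one (by linarith)]; nlinarith
  have hρ' : γ * X / c ≤ ρ := by rw [div_le_iff₀ (by linarith)]; linarith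
  have : X - α * ρ ≤ X * (1 - α * γ / c) := by
    have := mul_le_mul_of_nonneg_left hρ' hα0
    linarith [show X * (1 - α * γ / c) = X - α * (γ * X / c) by ring]
  calc (X - α * ρ) * (1 - α * γ / c) ^ m ≤ X * (1 - α * γ / c) * (1 - α * γ / c) ^ m := by gcongr
    _ = X * (1 - α * γ / c) ^ (m + 1) := by ring

end PotentialStep

open Finset

section PartitionMatroid

variable {ι κ : Type*} [DecidableEq κ] (part : ι → κ) (bi : κ → ℕ)

def PartitionFeasible (T : Finset ι) : Prop :=
  ∀ i, (T.filter fun x => part x = i).card ≤ bi i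

variable {part bi}

lemma PartitionFeasible.mono {T T' : Finset ι} (h : PartitionFeasible part bi T') (hT : T ⊆ T') :
    PartitionFeasible part bi T :=
  fun i => (card_le_card (filter_subset_filter _ hT)).trans (h i)

lemma PartitionFeasible.card_le_sum [Fintype κ] {T : Finset ι} (h : PartitionFeasible part bi T) :
    T.card ≤ ∑ i, bi i := by
  rw [card_eq_sum_card_fiberwise fun x _ => mem_univ (part x)]
  exact sum_le_sum fun i _ => h i

lemma partitionFeasible_of_card_le {T : Finset ι} (h : ∀ i, T.card ≤ bi i) :
    PartitionFeasible part bi T :=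
  fun i => (card_filter_le _ _).trans (h i)

variable [DecidableEq ι] (part bi)

def IsPartitionDRRatio (f : Finset ι → ℝ) (γ : ℝ) : Prop :=
  ∀ S T : Finset ι, S ⊆ T → PartitionFeasible part bi (T \ S) →
    ∀ e ∉ T, γ * (f (insert e T) - f T) ≤ f (insert e S) - f S

def IsPartitionCurvature (f : Finset ι → ℝ) (α : ℝ) : Prop :=
  ∀ S T : Finset ι, S ⊆ T → PartitionFeasible part bi (T \ S) →
    ∀ e ∉ T, f (insert e T) - f T ≥ (1 - α) * (f (insert e S) - f S)

variable {part bi}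

lemma IsPartitionDRRatio.mul_sub_le {f : Finset ι → ℝ} {γ ρ : ℝ}
    (hDR : IsPartitionDRRatio part bi f γ) {S R : Finset ι} (hR : PartitionFeasible part bi R)
    (hRS : Disjoint R S) (hgain : ∀ o ∈ R, f (insert o S) - f S ≤ ρ) :
    γ * (f (S ∪ R) - f S) ≤ R.card * ρ := by
  induction R using Finset.induction_on with
  | empty => simp
  | insert a R ha ih =>
    have haS : a ∉ S := disjoint_left.mp hRS (mem_insert_self a R)
    have hR' : PartitionFeasible part bi R := hR.mono (subset_insert a R)
    have hstep := hDR S (S ∪ R) subset_union_left (hR'.mono (by simp)) a (by simp [haS, ha])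
    have hprev := ih hR' (hRS.mono_left (subset_insert a R))
      fun o ho => hgain o (mem_insert_of_mem ho)
    have hgain_a := hgain a (mem_insert_self a R)
    rw [union_insert, card_insert_of_notMem ha]
    push_cast
    linarith

end PartitionMatroid

section GreedyRun

variable {ι κ : Type*} [DecidableEq ι]

structure IsInsertionChain (S : ℕ → Finset ι) (e : ℕ → ι) (n : ℕ) : Prop where
  start : S 0 = ∅
  notMem : ∀ t < n, e t ∉ S t
  succ : ∀ t < n, S (t + 1) = insert (e t) (S t)

structure IsGreedyRun [DecidableEq κ] (part : ι → κ) (bi : κ → ℕ) (f : Finset ι → ℝ)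
    (S : ℕ → Finset ι) (e : ℕ → ι) (n : ℕ) : Prop extends IsInsertionChain S e n where
  greedy : ∀ t < n, ∀ o ∉ S t, ((S t).filter fun x => part x = part o).card < bi (part o) →
    f (insert o (S t)) - f (S t) ≤ f (insert (e t) (S t)) - f (S t)

def gainOutside (f : Finset ι → ℝ) (S : ℕ → Finset ι) (e : ℕ → ι) (Q : Finset ι) (t : ℕ) : ℝ :=
  ∑ j ∈ range t, if e j ∈ Q then 0 else f (S (j + 1)) - f (S j)

namespace IsInsertionChain

variable {S : ℕ → Finset ι} {e : ℕ → ι} {n : ℕ}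

lemma mono (h : IsInsertionChain S e n) {m : ℕ} (hm : m ≤ n) : IsInsertionChain S e m :=
  ⟨h.start, fun t ht => h.notMem t (ht.trans_le hm), fun t ht => h.succ t (ht.trans_le hm)⟩

lemma subset (h : IsInsertionChain S e n) {t u : ℕ} (htu : t ≤ u) (hu : u ≤ n) : S t ⊆ S u := by
  induction u, htu using Nat.le_induction with
  | base => rfl
  | succ u _ ih =>
    rw [h.succ u hu]
    exact (ih (by omega)).trans (subset_insert _ _)

lemma card_eq (h : IsInsertionChain S e n) {t : ℕ} (ht : t ≤ n) : (S t).card = t := by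
  induction t with
  | zero => simp [h.start]
  | succ t ih => rw [h.succ t ht, card_insert_of_notMem (h.notMem t ht), ih (by omega)]

lemma card_inter_succ (h : IsInsertionChain S e n) (Q : Finset ι) {t : ℕ} (ht : t < n) :
    (Q ∩ S (t + 1)).card = (Q ∩ S t).card + if e t ∈ Q then 1 else 0 := by
  rw [h.succ t ht]
  split_ifs with he
  · rw [inter_insert_of_mem he, card_insert_of_notMem fun hm => h.notMem t ht (mem_inter.mp hm).2]
  · rw [inter_insert_of_notMem he, add_zero]

lemma add_gainOutside_le [DecidableEq κ] {part : ι → κ} {bi : κ → ℕ} {f : Finset ι → ℝ} {α : ℝ}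
    (h : IsInsertionChain S e n) (hα : IsPartitionCurvature part bi f α) {Q : Finset ι}
    (hQ : PartitionFeasible part bi Q) {t : ℕ} (ht : t ≤ n) :
    f Q + (1 - α) * gainOutside f S e Q t ≤ f (Q ∪ S t) := by
  induction t with
  | zero => simp [h.start, gainOutside]
  | succ t ih =>
    have ih := ih (by omega)
    rw [gainOutside, sum_range_succ, ← gainOutside, h.succ t ht, union_insert]
    split_ifs with he
    · rw [insert_eq_of_mem (mem_union_left _ he), add_zero]
      exact ih
    · have hcurv := hα (S t) (Q ∪ S t) subset_union_right
        (hQ.mono (by rw [union_sdiff_right]; exact sdiff_subset))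
        (e t) (by simp [he, h.notMem t ht])
      rw [← h.succ t ht] at hcurv ⊢
      linarith

lemma gainOutside_nonneg {f : Finset ι → ℝ} (h : IsInsertionChain S e n)
    (hmono : ∀ A B : Finset ι, A ⊆ B → f A ≤ f B) (Q : Finset ι) {t : ℕ} (ht : t ≤ n) :
    0 ≤ gainOutside f S e Q t := by
  refine sum_nonneg fun j hj => ?_
  split_ifs
  · rfl
  · exact sub_nonneg.mpr (hmono _ _ (h.subset j.le_succ (by rw [mem_range] at hj; omega)))

end IsInsertionChain


noncomputable def greedyPotential (f : Finset ι → ℝ) (S : ℕ → Finset ι) (e : ℕ → ι) (Q : Finset ι)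
    (α γ : ℝ) (b n t : ℕ) : ℝ :=
  (1 - α) * (f (S t) - gainOutside f S e Q t)
    + (f Q - f (S t) + (1 - α) * gainOutside f S e Q t)
      * (1 - α * γ / ((b : ℝ) - (Q ∩ S t).card)) ^ (n - t)

namespace IsGreedyRun

variable [DecidableEq κ] {part : ι → κ} {bi : κ → ℕ} {f : Finset ι → ℝ} {S : ℕ → Finset ι}
  {e : ℕ → ι} {n : ℕ}

lemma mono (h : IsGreedyRun part bi f S e n) {m : ℕ} (hm : m ≤ n) : IsGreedyRun part bi f S e m :=
  ⟨h.toIsInsertionChain.mono hm, fun t ht => h.greedy t (ht.trans_le hm)⟩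

lemma gain_le (h : IsGreedyRun part bi f S e n) (hn : ∀ i, n ≤ bi i) {t : ℕ} (ht : t < n)
    {o : ι} (ho : o ∉ S t) : f (insert o (S t)) - f (S t) ≤ f (S (t + 1)) - f (S t) := by
  have hlegal : ((S t).filter fun x => part x = part o).card < bi (part o) :=
    ((card_filter_le _ _).trans_eq (h.card_eq ht.le)).trans_lt (ht.trans_le (hn _))
  rw [h.succ t ht]
  exact h.greedy t ht o ho hlegal

lemma mul_sub_le {γ : ℝ} (h : IsGreedyRun part bi f S e n) (hDR : IsPartitionDRRatio part bi f γ)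
    (hn : ∀ i, n ≤ bi i) {Q : Finset ι} (hQ : PartitionFeasible part bi Q) {t : ℕ} (ht : t < n) :
    γ * (f (Q ∪ S t) - f (S t)) ≤ (Q \ S t).card * (f (S (t + 1)) - f (S t)) := by
  rw [union_comm, ← union_sdiff_self_eq_union]
  exact hDR.mul_sub_le (hQ.mono sdiff_subset) sdiff_disjoint
    fun o ho => h.gain_le hn ht (mem_sdiff.mp ho).2

lemma mul_gap_le {α γ : ℝ} {b : ℕ} (h : IsGreedyRun part bi f S e n)
    (hmono : ∀ A B : Finset ι, A ⊆ B → f A ≤ f B) (hDR : IsPartitionDRRatio part bi f γ)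
    (hCurv : IsPartitionCurvature part bi f α) (hγ0 : 0 ≤ γ) (hn : ∀ i, n ≤ bi i) {Q : Finset ι}
    (hQ : PartitionFeasible part bi Q) (hQb : Q.card ≤ b) {t : ℕ} (ht : t < n) :
    γ * (f Q - f (S t) + (1 - α) * gainOutside f S e Q t)
      ≤ ((b : ℝ) - (Q ∩ S t).card) * (f (S (t + 1)) - f (S t)) := by
  have hcard : ((Q \ S t).card : ℝ) ≤ (b : ℝ) - (Q ∩ S t).card := by
    have := card_sdiff_add_card_inter Q (S t)
    rw [le_sub_iff_add_le]
    exact_mod_cast this.trans_le hQb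
  calc γ * (f Q - f (S t) + (1 - α) * gainOutside f S e Q t)
      ≤ γ * (f (Q ∪ S t) - f (S t)) := by
        have := h.add_gainOutside_le hCurv hQ ht.le
        gcongr; linarith
    _ ≤ (Q \ S t).card * (f (S (t + 1)) - f (S t)) := h.mul_sub_le hDR hn hQ ht
    _ ≤ ((b : ℝ) - (Q ∩ S t).card) * (f (S (t + 1)) - f (S t)) := by
        gcongr
        exact sub_nonneg.mpr (hmono _ _ (h.subset t.le_succ ht))

lemma greedyPotential_succ_le {α γ : ℝ} {b : ℕ} (h : IsGreedyRun part bi f S e n)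
    (hmono : ∀ A B : Finset ι, A ⊆ B → f A ≤ f B) (hDR : IsPartitionDRRatio part bi f γ)
    (hCurv : IsPartitionCurvature part bi f α) (hγ0 : 0 < γ) (hγ1 : γ ≤ 1) (hα0 : 0 ≤ α)
    (hα1 : α ≤ 1) (hn : ∀ i, n ≤ bi i) (hnb : n ≤ b) {Q : Finset ι}
    (hQ : PartitionFeasible part bi Q) (hQb : Q.card ≤ b)
    (hopt : ∀ T, PartitionFeasible part bi T → f T ≤ f Q) {t : ℕ} (ht : t < n) :
    greedyPotential f S e Q α γ b n (t + 1) ≤ greedyPotential f S e Q α γ b n t := by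
  set ρ := f (S (t + 1)) - f (S t) with hρ
  set τ := gainOutside f S e Q t
  set X := f Q - f (S t) + (1 - α) * τ
  set c : ℝ := (b : ℝ) - (Q ∩ S t).card with hc
  have hX0 : 0 ≤ X := by
    have := hopt (S t)
      (partitionFeasible_of_card_le fun i => (h.card_eq ht.le).trans_le (ht.le.trans (hn i)))
    have := h.gainOutside_nonneg hmono Q ht.le
    have : 0 ≤ (1 - α) * τ := by positivity
    linarith
  have hkey : γ * X ≤ c * ρ := h.mul_gap_le hmono hDR hCurv hγ0.le hn hQ hQb ht
  have hsc : (Q ∩ S t).card ≤ t := (card_le_card inter_subset_right).trans_eq (h.card_eq ht.le)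
  have hc1 : 1 ≤ c := by
    rw [hc, le_sub_iff_add_le]
    exact_mod_cast (by omega : 1 + (Q ∩ S t).card ≤ b)
  have hm : ((n - t - 1 : ℕ) : ℝ) ≤ c - 1 := by
    rw [hc, sub_sub, le_sub_iff_add_le]
    exact_mod_cast (by omega : n - t - 1 + ((Q ∩ S t).card + 1) ≤ b)
  have hτ : gainOutside f S e Q (t + 1) = τ + if e t ∈ Q then 0 else ρ := sum_range_succ _ _
  have hf : f (S (t + 1)) = f (S t) + ρ := by ring
  unfold greedyPotential
  rw [show n - t = n - t - 1 + 1 by omega, show n - (t + 1) = n - t - 1 by omega, hτ,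
    h.card_inter_succ Q ht, hf]
  split_ifs with he
  · have hstep := overlap_step_le hγ0 hγ1 hα0 hα1 hc1 hm hX0 hkey
    have hbase : (b : ℝ) - ((Q ∩ S t).card + 1 : ℕ) = c - 1 := by push_cast; ring
    rw [hbase]
    linear_combination hstep
  · have hstep := nonoverlap_step_le (m := n - t - 1) hγ0 hγ1 hα0 hα1 hc1 hkey
    rw [add_zero]
    linear_combination hstep

lemma one_sub_pow_mul_le {α γ : ℝ} {b : ℕ} (h : IsGreedyRun part bi f S e n)
    (hmono : ∀ A B : Finset ι, A ⊆ B → f A ≤ f B) (hf0 : f ∅ = 0)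
    (hDR : IsPartitionDRRatio part bi f γ) (hCurv : IsPartitionCurvature part bi f α)
    (hγ0 : 0 < γ) (hγ1 : γ ≤ 1) (hα0 : 0 ≤ α) (hα1 : α ≤ 1) (hn : ∀ i, n ≤ bi i) (hnb : n ≤ b)
    {Q : Finset ι} (hQ : PartitionFeasible part bi Q) (hQb : Q.card ≤ b)
    (hopt : ∀ T, PartitionFeasible part bi T → f T ≤ f Q) :
    (1 - (1 - α * γ / b) ^ n) * f Q ≤ α * f (S n) := by
  have hdesc : ∀ t ≤ n, greedyPotential f S e Q α γ b n t ≤ greedyPotential f S e Q α γ b n 0 := by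
    intro t ht
    induction t with
    | zero => rfl
    | succ t ih =>
      exact (h.greedyPotential_succ_le hmono hDR hCurv hγ0 hγ1 hα0 hα1 hn hnb hQ hQb hopt ht).trans
        (ih (by omega))
  have hstart : greedyPotential f S e Q α γ b n 0 = f Q * (1 - α * γ / b) ^ n := by
    simp [greedyPotential, h.start, gainOutside, hf0]
  have hend : greedyPotential f S e Q α γ b n n = f Q - α * f (S n) := by
    simp only [greedyPotential, Nat.sub_self, pow_zero]
    ring
  linarith [hdesc n le_rfl]

end IsGreedyRun

end GreedyRun

theorem greedy_partition_matroid_ratio_two_general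
    {ι : Type*} [DecidableEq ι]
    (k : ℕ) (part : ι → Fin k) (bi : Fin k → ℕ)
    (b : ℕ) (hb : b = ∑ i, bi i)
    (bhat : ℕ) (hbhat_le : ∀ i, bhat ≤ bi i) (hbhat_mem : ∃ i, bi i = bhat)
    (f : Finset ι → ℝ)
    (hmono : ∀ S T : Finset ι, S ⊆ T → f S ≤ f T)
    (hf0 : f (∅ : Finset ι) = 0)
    (γ α : ℝ) (hγ0 : 0 < γ) (hγ1 : γ ≤ 1) (hα0 : 0 ≤ α) (hα1 : α ≤ 1)
    -- γ is a partition-matroid diminishing-return ratio of f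
    (hDR : ∀ S T : Finset ι, S ⊆ T →
      (∀ i, ((T \ S).filter fun x => part x = i).card ≤ bi i) →
      ∀ e ∉ T, γ * (f (insert e T) - f T) ≤ f (insert e S) - f S)
    -- α is a partition-matroid curvature of f
    (hCurv : ∀ S T : Finset ι, S ⊆ T →
      (∀ i, ((T \ S).filter fun x => part x = i).card ≤ bi i) →
      ∀ e ∉ T, f (insert e T) - f T ≥ (1 - α) * (f (insert e S) - f S))
    -- S is the sequence of sets produced by the greedy algorithm
    (S : ℕ → Finset ι)
    (hS0 : S 0 = ∅)
    (hstep : ∀ t < b, ∃ e ∉ S t,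
      ((S t).filter fun x => part x = part e).card < bi (part e) ∧
      S (t + 1) = insert e (S t) ∧
      ∀ e' ∉ S t, ((S t).filter fun x => part x = part e').card < bi (part e') →
        f (insert e' (S t)) - f (S t) ≤ f (insert e (S t)) - f (S t))
    -- S* is a feasible set maximizing f
    (Sstar : Finset ι)
    (hfeas : ∀ i, (Sstar.filter fun x => part x = i).card ≤ bi i)
    (hopt : ∀ Q : Finset ι, (∀ i, (Q.filter fun x => part x = i).card ≤ bi i) → f Q ≤ f Sstar) :
    (1 - (1 - α * γ / (b : ℝ)) ^ bhat) * f Sstar ≤ α * f (S b) := by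
  rcases isEmpty_or_nonempty ι with hι | hι
  · simp [Subsingleton.elim _ (∅ : Finset ι), hf0]
  obtain ⟨i₀, rfl⟩ := hbhat_mem
  have hbhat_b : bi i₀ ≤ b := hb ▸ single_le_sum (fun i _ => Nat.zero_le (bi i)) (mem_univ i₀)
  choose! e he_notMem _ he_succ he_greedy using hstep
  have hrun : IsGreedyRun part bi f S e b := ⟨⟨hS0, he_notMem, he_succ⟩, he_greedy⟩
  calc (1 - (1 - α * γ / b) ^ bi i₀) * f Sstar
      ≤ α * f (S (bi i₀)) :=
        (hrun.mono hbhat_b).one_sub_pow_mul_le hmono hf0 hDR hCurv hγ0 hγ1 hα0 hα1 hbhat_le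
          hbhat_b hfeas (hb ▸ PartitionFeasible.card_le_sum hfeas) hopt
    _ ≤ α * f (S b) := by
        gcongr
        exact hmono _ _ (hrun.subset hbhat_b le_rfl)

/-- Greedy for monotone non-submodular maximization under a partition matroid:
if `γ` is a partition-matroid diminishing-return ratio and `α` a
partition-matroid curvature of the monotone normalized function `f`, and
`S 0 = ∅, S 1, …, S b` is a run of the greedy algorithm, then
`(1 − (1 − α·γ/b)^b̂) · f(S*) ≤ α · f(S b)` for any feasible maximizer `S*`,
where `b̂ = min_i b_i`. -/
theorem greedy_partition_matroid_ratio_two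
    {ι : Type*} [Fintype ι] [DecidableEq ι]
    (k : ℕ) (hk : 0 < k) (part : ι → Fin k) (bi : Fin k → ℕ)
    (hbi : ∀ i, 1 ≤ bi i ∧ bi i ≤ (Finset.univ.filter fun x => part x = i).card)
    (b : ℕ) (hb : b = ∑ i, bi i)
    (bhat : ℕ) (hbhat_le : ∀ i, bhat ≤ bi i) (hbhat_mem : ∃ i, bi i = bhat)
    (f : Finset ι → ℝ)
    (hmono : ∀ S T : Finset ι, S ⊆ T → f S ≤ f T)
    (hf0 : f (∅ : Finset ι) = 0)
    (γ α : ℝ) (hγ0 : 0 < γ) (hγ1 : γ ≤ 1) (hα0 : 0 ≤ α) (hα1 : α ≤ 1)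
    -- γ is a partition-matroid diminishing-return ratio of f
    (hDR : ∀ S T : Finset ι, S ⊆ T →
      (∀ i, ((T \ S).filter fun x => part x = i).card ≤ bi i) →
      ∀ e ∉ T, γ * (f (insert e T) - f T) ≤ f (insert e S) - f S)
    -- α is a partition-matroid curvature of f
    (hCurv : ∀ S T : Finset ι, S ⊆ T →
      (∀ i, ((T \ S).filter fun x => part x = i).card ≤ bi i) →
      ∀ e ∉ T, f (insert e T) - f T ≥ (1 - α) * (f (insert e S) - f S))
    -- S is the sequence of sets produced by the greedy algorithm
    (S : ℕ → Finset ι)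
    (hS0 : S 0 = ∅)
    (hstep : ∀ t < b, ∃ e ∉ S t,
      ((S t).filter fun x => part x = part e).card < bi (part e) ∧
      S (t + 1) = insert e (S t) ∧
      ∀ e' ∉ S t, ((S t).filter fun x => part x = part e').card < bi (part e') →
        f (insert e' (S t)) - f (S t) ≤ f (insert e (S t)) - f (S t))
    -- S* is a feasible set maximizing f
    (Sstar : Finset ι)
    (hfeas : ∀ i, (Sstar.filter fun x => part x = i).card ≤ bi i)
    (hopt : ∀ Q : Finset ι, (∀ i, (Q.filter fun x => part x = i).card ≤ bi i) → f Q ≤ f Sstar) :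
    (1 - (1 - α * γ / (b : ℝ)) ^ bhat) * f Sstar ≤ α * f (S b) :=
  greedy_partition_matroid_ratio_two_general k part bi b hb bhat hbhat_le hbhat_mem f hmono hf0 γ α
    hγ0 hγ1 hα0 hα1 hDR hCurv S hS0 hstep Sstar hfeas hopt
end

section
/- Let 0 < γ' ≤ 1 and 0 ≤ α' ≤ 1 with γ'(1−α') < 1, let γ, α be reals with γ' ≤ γ ≤ 1 and 0 ≤ α ≤ α', and let n̄ be a positive integer. Let U be a nonempty finite set with |U| ≤ n̄, let ρ : U → ℝ be nonnegative, let U' ⊆ U, and let e' ∈ U \ U'. Set a = ⌈(|U|+1)/(1−γ'(1−α'))⌉ − 1, assume Σ_{v∈U} ρ(v)^a > 0, and define P(u) = ρ(u)^a / Σ_{v∈U} ρ(v)^a for u ∈ U. Then Σ_{u∈U'} ((1/γ)·ρ(e') − (1−α)·ρ(u)) · P(u) ≤ (1/γ' + α' − 1)·(1 − 1/(n̄+2)) · Σ_{u∈U} ρ(u)·P(u). -/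
set_option maxHeartbeats 600000

/-- Weighted AM-GM style inequality: `(a+1)·r·xᵃ ≤ a·xᵃ⁺¹ + rᵃ⁺¹`. -/
lemma prob_aux_amgm (a : ℕ) {r x : ℝ} (hr : 0 ≤ r) (hx : 0 ≤ x) :
    ((a : ℝ) + 1) * (r * x ^ a) ≤ (a : ℝ) * (x ^ a * x) + r ^ a * r := by
  induction a with
  | zero => simp
  | succ n ih =>
    have hxx : x ^ (n + 1) = x ^ n * x := pow_succ x n
    have hrr : r ^ (n + 1) = r ^ n * r := pow_succ r n
    rw [hxx, hrr]
    have key : 0 ≤ (x - r) * (x ^ n * x - r ^ n * r) := by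
      rcases le_total r x with h | h
      · have h2 := pow_le_pow_left₀ hr h (n + 1)
        rw [hxx, hrr] at h2
        exact mul_nonneg (by linarith) (by linarith)
      · have h2 := pow_le_pow_left₀ hx h (n + 1)
        rw [hxx, hrr] at h2
        have h3 : 0 ≤ (r - x) * (r ^ n * r - x ^ n * x) :=
          mul_nonneg (by linarith) (by linarith)
        linarith [h3]
    have ih' := mul_le_mul_of_nonneg_right ih hx
    push_cast
    linarith [key, ih']

/-- Key per-step exchange inequality underlying the approximation guarantee of
the randomized algorithm Prob: with `a = ⌈(|U|+1)/(1−γ'(1−α'))⌉ − 1` and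
`P(u) = ρ(u)^a / Σ_{v∈U} ρ(v)^a`,
`Σ_{u∈U'} ((1/γ)·ρ(e') − (1−α)·ρ(u))·P(u)
   ≤ (1/γ' + α' − 1)·(1 − 1/(n̄+2))·Σ_{u∈U} ρ(u)·P(u)`. -/
theorem prob_exchange_step {ι : Type*} [DecidableEq ι]
    (γ' α' γ α : ℝ) (hγ'0 : 0 < γ') (hγ'1 : γ' ≤ 1) (hα'0 : 0 ≤ α') (hα'1 : α' ≤ 1)
    (hlt : γ' * (1 - α') < 1)
    (hγ : γ' ≤ γ) (hγ1 : γ ≤ 1) (hα0 : 0 ≤ α) (hα : α ≤ α')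
    (nbar : ℕ) (hnbar : 0 < nbar)
    (U : Finset ι) (hUne : U.Nonempty) (hUcard : U.card ≤ nbar)
    (ρ : ι → ℝ) (hρ : ∀ u ∈ U, 0 ≤ ρ u)
    (U' : Finset ι) (hU' : U' ⊆ U) (e' : ι) (he' : e' ∈ U \ U')
    (a : ℕ) (ha : a = ⌈((U.card : ℝ) + 1) / (1 - γ' * (1 - α'))⌉₊ - 1)
    (hsum : 0 < ∑ v ∈ U, ρ v ^ a) :
    ∑ u ∈ U', ((1 / γ) * ρ e' - (1 - α) * ρ u) * (ρ u ^ a / ∑ v ∈ U, ρ v ^ a)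
      ≤ (1 / γ' + α' - 1) * (1 - 1 / ((nbar : ℝ) + 2))
          * ∑ u ∈ U, ρ u * (ρ u ^ a / ∑ v ∈ U, ρ v ^ a) := by
  classical
  have he'U : e' ∈ U := (Finset.mem_sdiff.mp he').1
  have he'U' : e' ∉ U' := (Finset.mem_sdiff.mp he').2
  have hre : 0 ≤ ρ e' := hρ e' he'U
  set S : ℝ := ∑ v ∈ U, ρ v ^ a with hSdef
  have hS0 : 0 < S := hsum
  set r : ℝ := ρ e' with hrdef
  set c : ℝ := γ' * (1 - α') with hcdef
  have hc0 : 0 ≤ c := mul_nonneg hγ'0.le (by linarith)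
  have hc1 : c < 1 := hlt
  have hd0 : (0 : ℝ) < 1 - c := by linarith
  set m : ℕ := U.card with hmdef
  have hm1 : 1 ≤ m := Finset.card_pos.mpr hUne
  have hm1R : (1 : ℝ) ≤ (m : ℝ) := by exact_mod_cast hm1
  have hmn : (m : ℝ) ≤ (nbar : ℝ) := by exact_mod_cast hUcard
  -- facts about a
  have hx2 : (2 : ℝ) ≤ ((m : ℝ) + 1) / (1 - c) := by
    rw [le_div_iff₀ hd0]; linarith
  have hceil2 : 1 < ⌈((m : ℝ) + 1) / (1 - c)⌉₊ := by
    rw [Nat.lt_ceil]; push_cast; linarith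
  have haN : a + 1 = ⌈((m : ℝ) + 1) / (1 - c)⌉₊ := by omega
  have hA1 : ((m : ℝ) + 1) / (1 - c) ≤ (a : ℝ) + 1 := by
    have h := Nat.le_ceil (((m : ℝ) + 1) / (1 - c))
    rw [← haN] at h; push_cast at h; linarith
  have hA2 : (a : ℝ) + 1 < ((m : ℝ) + 1) / (1 - c) + 1 := by
    have h := Nat.ceil_lt_add_one (show (0 : ℝ) ≤ ((m : ℝ) + 1) / (1 - c) by linarith)
    rw [← haN] at h; push_cast at h; linarith
  have hN0 : (0 : ℝ) < (a : ℝ) + 1 := by positivity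
  have hA1' : (m : ℝ) + 1 ≤ ((a : ℝ) + 1) * (1 - c) := by
    rw [div_le_iff₀ hd0] at hA1; linarith
  have hA2' : (a : ℝ) * (1 - c) < (m : ℝ) + 1 := by
    have h : (a : ℝ) < ((m : ℝ) + 1) / (1 - c) := by linarith
    rw [lt_div_iff₀ hd0] at h; linarith
  set ε : ℝ := 1 / ((nbar : ℝ) + 2) with hεdef
  have hnb2 : (0 : ℝ) < (nbar : ℝ) + 2 := by positivity
  have hε0 : 0 ≤ ε := by positivity
  have hε1 : ε * ((nbar : ℝ) + 2) = 1 := by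
    rw [hεdef]; field_simp
  have hεle : ε ≤ 1 := by
    have hnn : (0 : ℝ) ≤ (nbar : ℝ) * ε := mul_nonneg (Nat.cast_nonneg nbar) hε0
    linarith
  -- coefficient bounds
  have h1 : ((a : ℝ) + 1) * (1 - c) ≤ (nbar : ℝ) + 2 := by linarith [hA2', hc0, hmn]
  have hC2 : (a : ℝ) - ((a : ℝ) + 1) * c ≤ ((a : ℝ) + 1) * ((1 - c) * (1 - ε)) := by
    have h2 := mul_le_mul_of_nonneg_right h1 hε0
    linarith [h2, hε1]
  have hk : U'.card + 1 ≤ m := by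
    have hsub : insert e' U' ⊆ U := Finset.insert_subset he'U hU'
    have := Finset.card_le_card hsub
    rwa [Finset.card_insert_of_notMem he'U'] at this
  have hkR : (U'.card : ℝ) ≤ (m : ℝ) - 1 := by
    have : (U'.card : ℝ) + 1 ≤ (m : ℝ) := by exact_mod_cast hk
    linarith
  have hC1 : (U'.card : ℝ) ≤ ((a : ℝ) + 1) * ((1 - c) * (1 - ε)) := by
    have h1ε : (0 : ℝ) ≤ 1 - ε := by linarith
    have s1 : ((m : ℝ) + 1) * (1 - ε) ≤ ((a : ℝ) + 1) * (1 - c) * (1 - ε) :=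
      mul_le_mul_of_nonneg_right hA1' h1ε
    have hint : 0 ≤ ((nbar : ℝ) + 1 - (m : ℝ)) * ε :=
      mul_nonneg (by linarith) hε0
    have s2 : (U'.card : ℝ) ≤ ((m : ℝ) + 1) * (1 - ε) := by linarith [hint, hε1, hkR, hεle]
    linarith [s1, s2]
  have hβ0 : (0 : ℝ) ≤ (1 - c) * (1 - ε) := mul_nonneg hd0.le (by linarith)
  -- set B
  set B : ℝ := ∑ u ∈ U, ρ u * ρ u ^ a with hBdef
  have hS'0 : (0 : ℝ) ≤ ∑ u ∈ U', ρ u * ρ u ^ a :=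
    Finset.sum_nonneg fun u hu =>
      mul_nonneg (hρ u (hU' hu)) (pow_nonneg (hρ u (hU' hu)) a)
  have hrra : (0 : ℝ) ≤ r * r ^ a := mul_nonneg hre (pow_nonneg hre a)
  have hsubB : (∑ u ∈ U', ρ u * ρ u ^ a) + r * r ^ a ≤ B := by
    have h1 : ∑ u ∈ insert e' U', ρ u * ρ u ^ a = r * r ^ a + ∑ u ∈ U', ρ u * ρ u ^ a :=
      Finset.sum_insert he'U'
    have h2 : ∑ u ∈ insert e' U', ρ u * ρ u ^ a ≤ B :=
      Finset.sum_le_sum_of_subset_of_nonneg (Finset.insert_subset he'U hU')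
        (fun i hi _ => mul_nonneg (hρ i hi) (pow_nonneg (hρ i hi) a))
    linarith
  -- key inequality
  have hterm : ∀ u ∈ U', ((a : ℝ) + 1) * ((r - c * ρ u) * ρ u ^ a)
      ≤ ((a : ℝ) - ((a : ℝ) + 1) * c) * (ρ u * ρ u ^ a) + r * r ^ a := by
    intro u hu
    have hx := hρ u (hU' hu)
    have h := prob_aux_amgm a hre hx
    linarith [h]
  have KK : ((a : ℝ) + 1) * (∑ u ∈ U', (r - c * ρ u) * ρ u ^ a)
      ≤ ((a : ℝ) + 1) * (((1 - c) * (1 - ε)) * B) := by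
    rw [Finset.mul_sum]
    calc ∑ u ∈ U', ((a : ℝ) + 1) * ((r - c * ρ u) * ρ u ^ a)
        ≤ ∑ u ∈ U', (((a : ℝ) - ((a : ℝ) + 1) * c) * (ρ u * ρ u ^ a) + r * r ^ a) :=
          Finset.sum_le_sum hterm
      _ = ((a : ℝ) - ((a : ℝ) + 1) * c) * (∑ u ∈ U', ρ u * ρ u ^ a)
            + (U'.card : ℝ) * (r * r ^ a) := by
          rw [Finset.sum_add_distrib, ← Finset.mul_sum, Finset.sum_const, nsmul_eq_mul]
      _ ≤ (((a : ℝ) + 1) * ((1 - c) * (1 - ε))) * (∑ u ∈ U', ρ u * ρ u ^ a)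
            + (((a : ℝ) + 1) * ((1 - c) * (1 - ε))) * (r * r ^ a) :=
          add_le_add (mul_le_mul_of_nonneg_right hC2 hS'0)
            (mul_le_mul_of_nonneg_right hC1 hrra)
      _ ≤ ((a : ℝ) + 1) * (((1 - c) * (1 - ε)) * B) := by
          have h3 := mul_le_mul_of_nonneg_left hsubB (mul_nonneg hN0.le hβ0)
          linarith [h3]
  have K : (∑ u ∈ U', (r - c * ρ u) * ρ u ^ a) ≤ ((1 - c) * (1 - ε)) * B :=
    le_of_mul_le_mul_left KK hN0
  -- reduce original goal
  have hγ0 : (0 : ℝ) < γ := lt_of_lt_of_le hγ'0 hγ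
  have hrew : ∀ (W : Finset ι) (f : ι → ℝ),
      ∑ u ∈ W, f u * (ρ u ^ a / S) = (∑ u ∈ W, f u * ρ u ^ a) / S := by
    intro W f
    rw [Finset.sum_div]
    exact Finset.sum_congr rfl fun u _ => (mul_div_assoc _ _ _).symm
  rw [hrew U' (fun u => (1 / γ) * r - (1 - α) * ρ u), hrew U ρ, ← mul_div_assoc]
  rw [div_le_div_iff₀ hS0 hS0]
  apply mul_le_mul_of_nonneg_right _ hS0.le
  -- now: ∑ u ∈ U', ((1/γ)*r - (1-α)*ρ u) * ρ u ^ a ≤ C * B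
  have step1 : ∑ u ∈ U', ((1 / γ) * r - (1 - α) * ρ u) * ρ u ^ a
      ≤ ∑ u ∈ U', ((1 / γ') * r - (1 - α') * ρ u) * ρ u ^ a := by
    apply Finset.sum_le_sum
    intro u hu
    have hx := hρ u (hU' hu)
    have hpow : (0 : ℝ) ≤ ρ u ^ a := pow_nonneg hx a
    have hinv : 1 / γ ≤ 1 / γ' := one_div_le_one_div_of_le hγ'0 hγ
    have h1 : (1 / γ) * r ≤ (1 / γ') * r := mul_le_mul_of_nonneg_right hinv hre
    have h2 : (1 - α') * ρ u ≤ (1 - α) * ρ u :=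
      mul_le_mul_of_nonneg_right (by linarith) hx
    exact mul_le_mul_of_nonneg_right (by linarith) hpow
  have step2 : ∑ u ∈ U', ((1 / γ') * r - (1 - α') * ρ u) * ρ u ^ a
      = (1 / γ') * ∑ u ∈ U', (r - c * ρ u) * ρ u ^ a := by
    rw [Finset.mul_sum]
    apply Finset.sum_congr rfl
    intro u _
    have hcc : (1 / γ') * c = 1 - α' := by
      rw [hcdef]; field_simp
    linear_combination (ρ u * ρ u ^ a) * hcc
  have step3 : (1 / γ') * (((1 - c) * (1 - ε)) * B)
      = (1 / γ' + α' - 1) * (1 - ε) * B := by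
    have hγγ : (1 / γ') * (1 - c) = 1 / γ' + α' - 1 := by
      rw [hcdef]; field_simp; ring
    linear_combination ((1 - ε) * B) * hγγ
  have step4 : (1 / γ') * (∑ u ∈ U', (r - c * ρ u) * ρ u ^ a)
      ≤ (1 / γ') * (((1 - c) * (1 - ε)) * B) :=
    mul_le_mul_of_nonneg_left K (by positivity)
  calc ∑ u ∈ U', ((1 / γ) * r - (1 - α) * ρ u) * ρ u ^ a
      ≤ ∑ u ∈ U', ((1 / γ') * r - (1 - α') * ρ u) * ρ u ^ a := step1
    _ = (1 / γ') * ∑ u ∈ U', (r - c * ρ u) * ρ u ^ a := step2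
    _ ≤ (1 / γ') * (((1 - c) * (1 - ε)) * B) := step4
    _ = (1 / γ' + α' - 1) * (1 - ε) * B := step3
end

section
/- Let U be a finite set, a a natural number, and ρ : U → ℝ a nonnegative function with Σ_{v∈U} ρ(v)^a > 0; define P(u) = ρ(u)^a / Σ_{v∈U} ρ(v)^a for u ∈ U. Let γ > 0, let α be a real number, let U' ⊆ U, and let e' ∈ U. Then (1/γ)·Σ_{u∈U'} ρ(e')·P(u) − (1−α)·Σ_{u∈U'} ρ(u)·P(u) ≤ (|U'|/(γ·(a+1)))·ρ(e')·P(e') + ((1/γ)·(a/(a+1)) + α − 1)·Σ_{u∈U'} ρ(u)·P(u). -/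
/-!
The `α`-terms on the two sides cancel, so after clearing `γ` and the normalising sum the
inequality is the sum over `u ∈ U'` of the weighted AM–GM (Young) inequality
`ρ(e') ρ(u)^a ≤ (ρ(e')^(a+1) + a ρ(u)^(a+1)) / (a+1)`.
-/

open Finset

theorem Real.mul_pow_le_add_mul_pow_succ_div (a : ℕ) {x y : ℝ} (hx : 0 ≤ x) (hy : 0 ≤ y) :
    x * y ^ a ≤ (x ^ (a + 1) + a * y ^ (a + 1)) / (a + 1) := by
  have hx' : (x ^ (a + 1)) ^ ((a + 1 : ℕ) : ℝ)⁻¹ = x :=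
    Real.pow_rpow_inv_natCast hx a.succ_ne_zero
  have hy' : (y ^ (a + 1)) ^ (((a + 1 : ℕ) : ℝ)⁻¹ * a) = y ^ a := by
    rw [Real.rpow_mul_natCast (by positivity), Real.pow_rpow_inv_natCast hy a.succ_ne_zero]
  have amgm := Real.geom_mean_le_arith_mean2_weighted (p₁ := x ^ (a + 1)) (p₂ := y ^ (a + 1))
    (w₁ := ((a + 1 : ℕ) : ℝ)⁻¹) (w₂ := ((a + 1 : ℕ) : ℝ)⁻¹ * a)
    (by positivity) (by positivity) (by positivity) (by positivity) (by push_cast; field_simp; ring)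
  rw [hx', hy'] at amgm
  calc x * y ^ a ≤ _ := amgm
    _ = _ := by push_cast; field_simp

theorem sum_mul_pow_div_le {ι : Type*} (s : Finset ι) (a : ℕ) (f : ι → ℝ)
    (hf : ∀ u ∈ s, 0 ≤ f u) {x S : ℝ} (hx : 0 ≤ x) (hS : 0 ≤ S) :
    ∑ u ∈ s, x * (f u ^ a / S)
      ≤ (#s : ℝ) / (a + 1) * (x * (x ^ a / S))
        + a / (a + 1) * ∑ u ∈ s, f u * (f u ^ a / S) := by
  have pointwise : ∀ u ∈ s, x * (f u ^ a / S)
      ≤ (x * (x ^ a / S) + a * (f u * (f u ^ a / S))) / (a + 1) := fun u hu =>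
    calc x * (f u ^ a / S) = x * f u ^ a / S := by ring
      _ ≤ (x ^ (a + 1) + a * f u ^ (a + 1)) / (a + 1) / S := by
        gcongr; exact Real.mul_pow_le_add_mul_pow_succ_div a hx (hf u hu)
      _ = _ := by ring
  calc ∑ u ∈ s, x * (f u ^ a / S)
      ≤ ∑ u ∈ s, (x * (x ^ a / S) + a * (f u * (f u ^ a / S))) / (a + 1) :=
        sum_le_sum pointwise
    _ = _ := by
      rw [← sum_div, sum_add_distrib, sum_const, nsmul_eq_mul, ← mul_sum]
      ring

theorem prob_amgm_step_general {ι : Type*} (U : Finset ι) (a : ℕ)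
    (ρ : ι → ℝ) (hρ : ∀ u ∈ U, 0 ≤ ρ u)
    (hsum : 0 < ∑ v ∈ U, ρ v ^ a)
    (γ α : ℝ) (hγ : 0 < γ)
    (U' : Finset ι) (hU' : U' ⊆ U) (e' : ι) (he' : e' ∈ U) :
    (1 / γ) * ∑ u ∈ U', ρ e' * (ρ u ^ a / ∑ v ∈ U, ρ v ^ a)
        - (1 - α) * ∑ u ∈ U', ρ u * (ρ u ^ a / ∑ v ∈ U, ρ v ^ a)
      ≤ ((U'.card : ℝ) / (γ * ((a : ℝ) + 1))) * (ρ e' * (ρ e' ^ a / ∑ v ∈ U, ρ v ^ a))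
        + ((1 / γ) * ((a : ℝ) / ((a : ℝ) + 1)) + α - 1)
            * ∑ u ∈ U', ρ u * (ρ u ^ a / ∑ v ∈ U, ρ v ^ a) := by
  have young := sum_mul_pow_div_le U' a ρ (fun u hu => hρ u (hU' hu)) (hρ e' he') hsum.le
  rw [div_mul_eq_div_div]
  linear_combination mul_le_mul_of_nonneg_left young (one_div_nonneg.2 hγ.le)

/-- AM–GM recursion step in the analysis of the randomized algorithm Prob:
with `P(u) = ρ(u)^a / Σ_{v∈U} ρ(v)^a`,
`(1/γ)·Σ_{u∈U'} ρ(e')·P(u) − (1−α)·Σ_{u∈U'} ρ(u)·P(u)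
  ≤ (|U'|/(γ·(a+1)))·ρ(e')·P(e') + ((1/γ)·(a/(a+1)) + α − 1)·Σ_{u∈U'} ρ(u)·P(u)`. -/
theorem prob_amgm_step {ι : Type*} [DecidableEq ι] (U : Finset ι) (a : ℕ)
    (ρ : ι → ℝ) (hρ : ∀ u ∈ U, 0 ≤ ρ u)
    (hsum : 0 < ∑ v ∈ U, ρ v ^ a)
    (γ α : ℝ) (hγ : 0 < γ)
    (U' : Finset ι) (hU' : U' ⊆ U) (e' : ι) (he' : e' ∈ U) :
    (1 / γ) * ∑ u ∈ U', ρ e' * (ρ u ^ a / ∑ v ∈ U, ρ v ^ a)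
        - (1 - α) * ∑ u ∈ U', ρ u * (ρ u ^ a / ∑ v ∈ U, ρ v ^ a)
      ≤ ((U'.card : ℝ) / (γ * ((a : ℝ) + 1))) * (ρ e' * (ρ e' ^ a / ∑ v ∈ U, ρ v ^ a))
        + ((1 / γ) * ((a : ℝ) / ((a : ℝ) + 1)) + α - 1)
            * ∑ u ∈ U', ρ u * (ρ u ^ a / ∑ v ∈ U, ρ v ^ a) :=
  prob_amgm_step_general U a ρ hρ hsum γ α hγ U' hU' e' he'
end

section
/- Let 0 < γ' ≤ γ ≤ 1 and 0 ≤ α ≤ α' ≤ 1 with γ'(1−α') < 1, and let m', m, n̄ be natural numbers with m' ≤ m ≤ n̄ and m ≥ 1. Set a = ⌈(m+1)/(1−γ'(1−α'))⌉ − 1. Then m'/(γ·(a+1)) ≤ (1/γ' + α' − 1)·(1 − 1/(n̄+1)). -/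
/-- Arithmetic estimate in the analysis of Prob: with
`a = ⌈(m+1)/(1−γ'(1−α'))⌉ − 1`, for `m' ≤ m ≤ n̄` and `m ≥ 1`,
`m'/(γ·(a+1)) ≤ (1/γ' + α' − 1)·(1 − 1/(n̄+1))`. -/
theorem prob_arith_first (γ' α' γ α : ℝ)
    (hγ'0 : 0 < γ') (hγ : γ' ≤ γ) (hγ1 : γ ≤ 1)
    (hα0 : 0 ≤ α) (hα : α ≤ α') (hα'1 : α' ≤ 1)
    (hlt : γ' * (1 - α') < 1)
    (m' m nbar : ℕ) (hm'm : m' ≤ m) (hmn : m ≤ nbar) (hm : 1 ≤ m)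
    (a : ℕ) (ha : a = ⌈((m : ℝ) + 1) / (1 - γ' * (1 - α'))⌉₊ - 1) :
    (m' : ℝ) / (γ * ((a : ℝ) + 1))
      ≤ (1 / γ' + α' - 1) * (1 - 1 / ((nbar : ℝ) + 1)) := by
  set c : ℝ := 1 - γ' * (1 - α') with hcdef
  have hc : 0 < c := by simp [hcdef]; linarith
  have hγ0 : 0 < γ := lt_of_lt_of_le hγ'0 hγ
  have hmpos : (0:ℝ) < (m:ℝ) + 1 := by positivity
  have hx : (0:ℝ) < ((m : ℝ) + 1) / c := div_pos hmpos hc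
  have hceil : 1 ≤ ⌈((m : ℝ) + 1) / c⌉₊ := Nat.one_le_iff_ne_zero.mpr (by
    simpa using (Nat.ceil_pos.mpr hx).ne')
  have ha1 : a + 1 = ⌈((m : ℝ) + 1) / c⌉₊ := by omega
  have hA : ((m : ℝ) + 1) / c ≤ (a : ℝ) + 1 := by
    have h := Nat.le_ceil (((m : ℝ) + 1) / c)
    rw [← ha1] at h
    push_cast at h
    linarith
  have hApos : (0:ℝ) < (a : ℝ) + 1 := by positivity
  have hmn' : (m' : ℝ) ≤ (m : ℝ) := by exact_mod_cast hm'm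
  have hmn2 : (m : ℝ) ≤ (nbar : ℝ) := by exact_mod_cast hmn
  have hnpos : (0:ℝ) < (nbar : ℝ) + 1 := by positivity
  have step1 : (m' : ℝ) / (γ * ((a : ℝ) + 1)) ≤ (m : ℝ) * c / (γ' * ((m : ℝ) + 1)) := by
    have hden : γ' * (((m : ℝ) + 1) / c) ≤ γ * ((a : ℝ) + 1) := by
      calc γ' * (((m : ℝ) + 1) / c) ≤ γ' * ((a : ℝ) + 1) := by
            exact mul_le_mul_of_nonneg_left hA hγ'0.le
        _ ≤ γ * ((a : ℝ) + 1) := by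
            exact mul_le_mul_of_nonneg_right hγ hApos.le
    have hdpos : (0:ℝ) < γ' * (((m : ℝ) + 1) / c) := by positivity
    have : (m' : ℝ) / (γ * ((a : ℝ) + 1)) ≤ (m : ℝ) / (γ' * (((m : ℝ) + 1) / c)) :=
      div_le_div₀ (by positivity) hmn' hdpos hden
    calc (m' : ℝ) / (γ * ((a : ℝ) + 1)) ≤ (m : ℝ) / (γ' * (((m : ℝ) + 1) / c)) := this
      _ = (m : ℝ) * c / (γ' * ((m : ℝ) + 1)) := by
          field_simp
  have hrhs : (1 / γ' + α' - 1) * (1 - 1 / ((nbar : ℝ) + 1))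
      = (nbar : ℝ) * c / (γ' * ((nbar : ℝ) + 1)) := by
    field_simp [hcdef]
    ring
  rw [hrhs]
  refine le_trans step1 ?_
  rw [div_le_div_iff₀ (by positivity) (by positivity)]
  nlinarith [mul_nonneg (mul_nonneg hc.le hγ'0.le) (sub_nonneg.mpr hmn2)]
end

section
/- Let 0 < γ' ≤ γ ≤ 1 and 0 ≤ α ≤ α' ≤ 1 with γ'(1−α') < 1, and let m, n̄ be natural numbers with 1 ≤ m ≤ n̄. Set a = ⌈(m+1)/(1−γ'(1−α'))⌉ − 1. Then (1/γ)·(a/(a+1)) + α − 1 ≤ (1/γ' + α' − 1)·(1 − 1/(n̄+2)). -/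
/-- Arithmetic estimate in the analysis of Prob: with
`a = ⌈(m+1)/(1−γ'(1−α'))⌉ − 1`, for `1 ≤ m ≤ n̄`,
`(1/γ)·(a/(a+1)) + α − 1 ≤ (1/γ' + α' − 1)·(1 − 1/(n̄+2))`. -/
theorem prob_arith_second (γ' α' γ α : ℝ)
    (hγ'0 : 0 < γ') (hγ : γ' ≤ γ) (hγ1 : γ ≤ 1)
    (hα0 : 0 ≤ α) (hα : α ≤ α') (hα'1 : α' ≤ 1)
    (hlt : γ' * (1 - α') < 1)
    (m nbar : ℕ) (hm : 1 ≤ m) (hmn : m ≤ nbar)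
    (a : ℕ) (ha : a = ⌈((m : ℝ) + 1) / (1 - γ' * (1 - α'))⌉₊ - 1) :
    (1 / γ) * ((a : ℝ) / ((a : ℝ) + 1)) + α - 1
      ≤ (1 / γ' + α' - 1) * (1 - 1 / ((nbar : ℝ) + 2)) := by
  set β : ℝ := 1 - γ' * (1 - α') with hβ
  have hβ0 : 0 < β := by simp [hβ]; linarith
  have hβ1 : β ≤ 1 := by nlinarith
  set c : ℕ := ⌈((m : ℝ) + 1) / β⌉₊ with hc
  have hm1 : (1:ℝ) ≤ (m:ℝ) := by exact_mod_cast hm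
  have hmn' : (m:ℝ) ≤ (nbar:ℝ) := by exact_mod_cast hmn
  have hx0 : (0:ℝ) < ((m:ℝ) + 1) / β := by positivity
  have hc1 : 1 ≤ c := Nat.one_le_ceil_iff.mpr hx0
  have hac : a + 1 = c := by omega
  have hca : (a:ℝ) + 1 = (c:ℝ) := by exact_mod_cast hac
  have hcR : (0:ℝ) < (c:ℝ) := by exact_mod_cast hc1
  have hclt : (c:ℝ) < ((m:ℝ) + 1) / β + 1 := Nat.ceil_lt_add_one hx0.le
  have h1 : ((c:ℝ) - 1) * β < (m:ℝ) + 1 := by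
    have h : (c:ℝ) - 1 < ((m:ℝ) + 1) / β := by linarith
    exact (lt_div_iff₀ hβ0).mp h
  have h2 : (c:ℝ) * β ≤ (m:ℝ) + 2 := by nlinarith
  have hfub : β / ((m:ℝ) + 2) ≤ 1 / (c:ℝ) := by
    rw [div_le_div_iff₀ (by positivity) hcR]
    nlinarith
  have hfrac : (a:ℝ) / ((a:ℝ) + 1) = 1 - 1 / (c:ℝ) := by
    rw [hca]
    have : (a:ℝ) = (c:ℝ) - 1 := by linarith
    rw [this]
    field_simp
  have hFub : (a:ℝ) / ((a:ℝ) + 1) ≤ 1 - β / ((m:ℝ) + 2) := by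
    rw [hfrac]; linarith
  have hγ0 : 0 < γ := lt_of_lt_of_le hγ'0 hγ
  have hinv : 1 / γ ≤ 1 / γ' := one_div_le_one_div_of_le hγ'0 hγ
  have hF0 : (0:ℝ) ≤ (a:ℝ) / ((a:ℝ) + 1) := by positivity
  have hBm : β / ((m:ℝ) + 2) ≤ 1 := by
    rw [div_le_one (by positivity)]; linarith
  have step1 : (1 / γ) * ((a:ℝ) / ((a:ℝ) + 1)) + α - 1
      ≤ (1 / γ') * (1 - β / ((m:ℝ) + 2)) + α' - 1 := by
    have h := mul_le_mul hinv hFub hF0 (le_of_lt (by positivity : (0:ℝ) < 1/γ'))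
    linarith
  have hKm : (1 / γ') * (β / ((m:ℝ) + 2)) = (1 / γ' + α' - 1) / ((m:ℝ) + 2) := by
    rw [hβ]
    field_simp
    ring
  have hK0 : 0 ≤ 1 / γ' + α' - 1 := by
    have : 1 ≤ 1 / γ' := by rw [le_div_iff₀ hγ'0]; linarith
    linarith
  have step3 : (1 / γ' + α' - 1) / ((nbar:ℝ) + 2) ≤ (1 / γ' + α' - 1) / ((m:ℝ) + 2) :=
    div_le_div_of_nonneg_left hK0 (by positivity) (by linarith)
  have expand : (1 / γ' + α' - 1) * (1 - 1 / ((nbar : ℝ) + 2))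
      = (1 / γ' + α' - 1) - (1 / γ' + α' - 1) / ((nbar:ℝ) + 2) := by ring
  have expand2 : (1 / γ') * (1 - β / ((m:ℝ) + 2)) + α' - 1
      = (1 / γ' + α' - 1) - (1 / γ' + α' - 1) / ((m:ℝ) + 2) := by
    rw [← hKm]; ring
  linarith [step1, step3]
end

section
/- Let N, M, r be natural numbers with 1 ≤ M ≤ N, and let p ∈ (0,1] be a real number. If r ≥ (N/M)·ln(1/p), then C(N−M, r) ≤ p · C(N, r), where C(·,·) denotes the binomial coefficient. Equivalently: if a subset R of size r is chosen uniformly at random from an N-element set U containing a fixed M-element subset W, then Pr[R ∩ W = ∅] ≤ p. -/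
private lemma descFactorial_ratio (N M : ℕ) (hMN : M ≤ N) (hN : 0 < N) :
    ∀ r : ℕ, ((N - M).descFactorial r : ℝ) ≤
      (((N : ℝ) - M) / N) ^ r * (N.descFactorial r : ℝ) := by
  intro r
  induction r with
  | zero => simp
  | succ k ih =>
    rw [Nat.descFactorial_succ, Nat.descFactorial_succ, pow_succ]
    push_cast
    have hq0 : (0:ℝ) ≤ ((N : ℝ) - M) / N := by
      apply div_nonneg _ (by positivity)
      have : (M:ℝ) ≤ N := by exact_mod_cast hMN
      linarith
    have hkey : ((N - M - k : ℕ) : ℝ) ≤ (((N : ℝ) - M) / N) * ((N - k : ℕ) : ℝ) := by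
      by_cases hk : N - M ≤ k
      · have : N - M - k = 0 := Nat.sub_eq_zero_of_le hk
        rw [this]
        push_cast
        positivity
      · push_neg at hk
        have hkN : k ≤ N := le_trans hk.le (Nat.sub_le _ _)
        rw [Nat.cast_sub hk.le, Nat.cast_sub hMN, Nat.cast_sub hkN]
        rw [div_mul_eq_mul_div, le_div_iff₀ (by exact_mod_cast hN)]
        have hM0 : (0:ℝ) ≤ M := Nat.cast_nonneg M
        have hk0 : (0:ℝ) ≤ k := Nat.cast_nonneg k
        nlinarith
    calc ((N - M - k : ℕ) : ℝ) * ((N - M).descFactorial k : ℝ)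
        ≤ ((((N : ℝ) - M) / N) * ((N - k : ℕ) : ℝ)) *
          ((((N : ℝ) - M) / N) ^ k * (N.descFactorial k : ℝ)) := by
          apply mul_le_mul hkey ih (by positivity)
          positivity
      _ = (((N : ℝ) - M) / N) ^ k * (((N : ℝ) - M) / N) *
          (((N - k : ℕ) : ℝ) * (N.descFactorial k : ℝ)) := by ring

/-- Sampling lemma underlying FastProb: if `1 ≤ M ≤ N`, `p ∈ (0,1]` and
`r ≥ (N/M)·ln(1/p)`, then `C(N−M, r) ≤ p · C(N, r)`; equivalently, a uniformly
random `r`-subset of an `N`-set misses a fixed `M`-subset with probability at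
most `p`. -/
theorem choose_avoid_le_of_sample_size (N M r : ℕ) (hM1 : 1 ≤ M) (hMN : M ≤ N)
    (p : ℝ) (hp0 : 0 < p) (hp1 : p ≤ 1)
    (hr : ((N : ℝ) / (M : ℝ)) * Real.log (1 / p) ≤ (r : ℝ)) :
    ((N - M).choose r : ℝ) ≤ p * ((N.choose r : ℕ) : ℝ) := by
  have hN : 0 < N := lt_of_lt_of_le hM1 hMN
  have hNR : (0:ℝ) < N := by exact_mod_cast hN
  have hMR : (0:ℝ) < M := by exact_mod_cast hM1
  have hMNR : (M:ℝ) ≤ N := by exact_mod_cast hMN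
  set q : ℝ := ((N : ℝ) - M) / N with hq
  have hq0 : 0 ≤ q := by
    apply div_nonneg _ hNR.le; linarith
  -- Step 1: choose ratio bound
  have h1 : ((N - M).choose r : ℝ) ≤ q ^ r * (N.choose r : ℝ) := by
    have hd := descFactorial_ratio N M hMN hN r
    rw [Nat.descFactorial_eq_factorial_mul_choose, Nat.descFactorial_eq_factorial_mul_choose] at hd
    push_cast at hd
    have hfac : (0:ℝ) < (r.factorial : ℝ) := by exact_mod_cast r.factorial_pos
    have hd2 : (r.factorial:ℝ) * ((N - M).choose r : ℝ) ≤
        (r.factorial:ℝ) * (q ^ r * (N.choose r : ℝ)) := by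
      rw [hq]; linarith [hd]
    exact le_of_mul_le_mul_left hd2 hfac
  -- Step 2: q ^ r ≤ p
  have h2 : q ^ r ≤ p := by
    have hqe : q ≤ Real.exp (-(M / N)) := by
      have := Real.add_one_le_exp (-(M / N : ℝ))
      have : 1 - (M:ℝ)/N ≤ Real.exp (-(M/N)) := by linarith
      calc q = 1 - (M:ℝ)/N := by rw [hq]; field_simp
        _ ≤ _ := this
    have hpow : q ^ r ≤ Real.exp (-(M / N)) ^ r :=
      pow_le_pow_left₀ hq0 hqe r
    rw [← Real.exp_nat_mul] at hpow
    have hlog : -Real.log p ≤ (M:ℝ)/N * r := by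
      rw [one_div, Real.log_inv] at hr
      have h := mul_le_mul_of_nonneg_left hr (le_of_lt (div_pos hMR hNR))
      have hid : (M:ℝ)/N * ((N:ℝ)/M * -Real.log p) = -Real.log p := by
        field_simp
      rw [hid] at h
      linarith [h]
    have : (r:ℝ) * -((M:ℝ)/N) ≤ Real.log p := by ring_nf; ring_nf at hlog; linarith
    calc q ^ r ≤ Real.exp ((r:ℝ) * -((M:ℝ)/N)) := hpow
      _ ≤ Real.exp (Real.log p) := Real.exp_le_exp.mpr this
      _ = p := Real.exp_log hp0
  calc ((N - M).choose r : ℝ) ≤ q ^ r * (N.choose r : ℝ) := h1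
    _ ≤ p * (N.choose r : ℝ) := by
        apply mul_le_mul_of_nonneg_right h2 (Nat.cast_nonneg _)
end

section
/- Let k ≥ 1 and let b_1, …, b_k and n_1, …, n_k be natural numbers with 1 ≤ b_i ≤ n_i for all i; write n = Σ_{i=1}^{k} n_i and b = Σ_{i=1}^{k} b_i. Then Σ_{i=1}^{k} Σ_{j=0}^{b_i−1} (n_i−j)/(b_i−j) ≤ b + n·(1 + ln b). -/
lemma harm_sum_bound (m : ℕ) (hm : 1 ≤ m) :
    ∑ j ∈ Finset.range m, 1 / ((m : ℝ) - j) ≤ 1 + Real.log m := by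
  have h1 : ∑ j ∈ Finset.range m, 1 / ((m : ℝ) - j)
      = ∑ j ∈ Finset.range m, 1 / ((j : ℝ) + 1) := by
    rw [← Finset.sum_range_reflect]
    apply Finset.sum_congr rfl
    intro j hj
    have hj' : j < m := Finset.mem_range.mp hj
    congr 1
    have : ((m - 1 - j : ℕ) : ℝ) = (m : ℝ) - 1 - j := by
      have : j ≤ m - 1 := Nat.le_sub_one_of_lt hj'
      push_cast [Nat.cast_sub this, Nat.cast_sub hm]
      ring
    rw [this]; ring
  rw [h1]
  have := harmonic_le_one_add_log m
  rw [harmonic] at this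
  push_cast at this
  simpa [one_div] using this

/-- Bound on the total number of sampled elements of FastProb:
`Σ_i Σ_{j=0}^{b_i−1} (n_i−j)/(b_i−j) ≤ b + n·(1 + ln b)` where `n = Σ_i n_i`,
`b = Σ_i b_i` and `1 ≤ b_i ≤ n_i` for all `i`. -/
theorem fastprob_query_bound (k : ℕ) (hk : 1 ≤ k) (ns bs : Fin k → ℕ)
    (hbs : ∀ i, 1 ≤ bs i ∧ bs i ≤ ns i)
    (n b : ℕ) (hn : n = ∑ i, ns i) (hb : b = ∑ i, bs i) :
    ∑ i, ∑ j ∈ Finset.range (bs i), (((ns i : ℝ)) - (j : ℝ)) / (((bs i : ℝ)) - (j : ℝ))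
      ≤ (b : ℝ) + (n : ℝ) * (1 + Real.log (b : ℝ)) := by
  have key : ∀ i, ∑ j ∈ Finset.range (bs i), ((ns i : ℝ) - j) / ((bs i : ℝ) - j)
      ≤ (bs i : ℝ) + (ns i : ℝ) * (1 + Real.log b) := by
    intro i
    obtain ⟨hbi, hni⟩ := hbs i
    have hbib : bs i ≤ b := by
      subst hb
      exact Finset.single_le_sum (fun j _ => Nat.zero_le _) (Finset.mem_univ i)
    have step1 : ∑ j ∈ Finset.range (bs i), ((ns i : ℝ) - j) / ((bs i : ℝ) - j)
        ≤ ∑ j ∈ Finset.range (bs i), (1 + (ns i : ℝ) * (1 / ((bs i : ℝ) - j))) := by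
      apply Finset.sum_le_sum
      intro j hj
      have hj' : j < bs i := Finset.mem_range.mp hj
      have hd : (0 : ℝ) < (bs i : ℝ) - j := by
        have : (j : ℝ) < bs i := by exact_mod_cast hj'
        linarith
      rw [div_le_iff₀ hd]
      have hjn : (j : ℝ) ≥ 0 := Nat.cast_nonneg j
      have hnn : (0 : ℝ) ≤ ns i := Nat.cast_nonneg _
      have hc : (ns i : ℝ) * (1 / ((bs i : ℝ) - j)) * ((bs i : ℝ) - j) = ns i := by
        field_simp
      nlinarith
    have step2 : ∑ j ∈ Finset.range (bs i), (1 + (ns i : ℝ) * (1 / ((bs i : ℝ) - j)))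
        = (bs i : ℝ) + (ns i : ℝ) * ∑ j ∈ Finset.range (bs i), 1 / ((bs i : ℝ) - j) := by
      rw [Finset.sum_add_distrib, ← Finset.mul_sum, Finset.sum_const, Finset.card_range]
      simp
    have step3 : ∑ j ∈ Finset.range (bs i), 1 / ((bs i : ℝ) - j) ≤ 1 + Real.log b := by
      refine (harm_sum_bound (bs i) hbi).trans ?_
      have : Real.log (bs i) ≤ Real.log b :=
        Real.log_le_log (by exact_mod_cast hbi) (by exact_mod_cast hbib)
      linarith
    calc ∑ j ∈ Finset.range (bs i), ((ns i : ℝ) - j) / ((bs i : ℝ) - j)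
        ≤ (bs i : ℝ) + (ns i : ℝ) * ∑ j ∈ Finset.range (bs i), 1 / ((bs i : ℝ) - j) := by
          rw [← step2]; exact step1
      _ ≤ (bs i : ℝ) + (ns i : ℝ) * (1 + Real.log b) := by
          have := Nat.cast_nonneg (α := ℝ) (ns i)
          nlinarith
  calc ∑ i, ∑ j ∈ Finset.range (bs i), ((ns i : ℝ) - j) / ((bs i : ℝ) - j)
      ≤ ∑ i, ((bs i : ℝ) + (ns i : ℝ) * (1 + Real.log b)) := Finset.sum_le_sum fun i _ => key i
    _ = (b : ℝ) + (n : ℝ) * (1 + Real.log b) := by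
        subst hn hb
        rw [Finset.sum_add_distrib, ← Finset.sum_mul]
        push_cast
        ring
end
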